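/- arXiv:2403.03625 — 3 statements merged into one kernel-verified Lean document; each statement's English description precedes it below -/
import Mathlib

section
/- Let h and k be positive integers with h ≤ k, and let A be a set of k positive integers (0 ∉ A). Then the restricted h-fold signed sumset satisfies |h^∧_± A| ≥ 2(hk − h²) + h(h+1)/2 + 1. -/
open Finset

/-- The restricted `h`-fold signed sumset of a finite set `A` of integers:
all sums `∑ λᵢ aᵢ` with `λᵢ ∈ {-1,0,1}` and `∑ |λᵢ| = h`. -/
def signedSumset (h : ℕ) (A : Finset ℤ) : Set ℤ :=
  {s | ∃ f : ℤ → ℤ, (∀ a, f a = -1 ∨ f a = 0 ∨ f a = 1) ∧ (∀ a ∉ A, f a = 0) ∧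
    (∑ a ∈ A, |f a|) = (h : ℤ) ∧ s = ∑ a ∈ A, f a * a}

namespace SSS

lemma sum_Ico_split (a : ℕ → ℤ) {m n : ℕ} (hmn : m < n) :
    ∑ i ∈ Ico m n, a i = a m + ∑ i ∈ Ico (m + 1) n, a i := by
  rw [← Finset.sum_Ico_consecutive a (Nat.le_succ m) hmn, Nat.Ico_succ_singleton,
    Finset.sum_singleton]

lemma mem_sss {h k : ℕ} {A : Finset ℤ} {a : ℕ → ℤ}
    (hA : ∀ i, i < k → a i ∈ A)
    (hinj : ∀ i, i < k → ∀ j, j < k → a i = a j → i = j)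
    (U V : Finset ℕ) (hUk : ∀ i ∈ U, i < k) (hVk : ∀ i ∈ V, i < k)
    (hUV : Disjoint U V) (hUVcard : U.card + V.card = h) :
    ((∑ i ∈ U, a i) - ∑ i ∈ V, a i) ∈ signedSumset h A := by
  classical
  have hUinj : Set.InjOn a ↑U := fun i hi j hj hij =>
    hinj i (hUk i hi) j (hUk j hj) hij
  have hVinj : Set.InjOn a ↑V := fun i hi j hj hij =>
    hinj i (hVk i hi) j (hVk j hj) hij
  set BU := U.image a with hBU
  set BV := V.image a with hBV
  have hBUA : BU ⊆ A := by
    intro x hx; obtain ⟨i, hi, rfl⟩ := Finset.mem_image.mp hx; exact hA i (hUk i hi)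
  have hBVA : BV ⊆ A := by
    intro x hx; obtain ⟨i, hi, rfl⟩ := Finset.mem_image.mp hx; exact hA i (hVk i hi)
  have hdisj : Disjoint BU BV := by
    rw [Finset.disjoint_left]
    rintro x hx hx'
    obtain ⟨i, hi, rfl⟩ := Finset.mem_image.mp hx
    obtain ⟨j, hj, hij⟩ := Finset.mem_image.mp hx'
    have hji := hinj j (hVk j hj) i (hUk i hi) hij
    subst hji
    exact (Finset.disjoint_left.mp hUV hi) hj
  refine ⟨fun x => if x ∈ BU then 1 else if x ∈ BV then -1 else 0, ?_, ?_, ?_, ?_⟩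
  · intro x; dsimp only; split_ifs <;> norm_num
  · intro x hx; dsimp only
    rw [if_neg (fun hmem => hx (hBUA hmem)), if_neg (fun hmem => hx (hBVA hmem))]
  · have e : ∀ x ∈ A, |if x ∈ BU then (1:ℤ) else if x ∈ BV then -1 else 0|
        = if x ∈ BU ∪ BV then (1:ℤ) else 0 := by
      intro x _
      by_cases h1 : x ∈ BU
      · simp [h1]
      · by_cases h2 : x ∈ BV <;> simp [h1, h2]
    rw [Finset.sum_congr rfl e, Finset.sum_ite_mem,
      Finset.inter_eq_right.mpr (Finset.union_subset hBUA hBVA), Finset.sum_const,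
      Finset.card_union_of_disjoint hdisj, Finset.card_image_of_injOn hUinj,
      Finset.card_image_of_injOn hVinj, hUVcard, nsmul_eq_mul, mul_one]
  · have e : ∀ x ∈ A, (if x ∈ BU then (1:ℤ) else if x ∈ BV then -1 else 0) * x
        = (if x ∈ BU then x else 0) - (if x ∈ BV then x else 0) := by
      intro x _
      by_cases h1 : x ∈ BU
      · have h2 : x ∉ BV := Finset.disjoint_left.mp hdisj h1
        simp [h1, h2]
      · by_cases h2 : x ∈ BV <;> simp [h1, h2]
    rw [Finset.sum_congr rfl e, Finset.sum_sub_distrib, Finset.sum_ite_mem, Finset.sum_ite_mem,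
      Finset.inter_eq_right.mpr hBUA, Finset.inter_eq_right.mpr hBVA,
      Finset.sum_image (fun i hi j hj => hinj i (hUk i hi) j (hUk j hj)),
      Finset.sum_image (fun i hi j hj => hinj i (hVk i hi) j (hVk j hj))]


variable {a : ℕ → ℤ} {h k : ℕ} {A : Finset ℤ}

def vp (a : ℕ → ℤ) (h k q r : ℕ) : ℤ :=
  (∑ i ∈ range (h - 1 - q), a i) + a (h - 1 - q + r) + ∑ i ∈ Ico (k - q) k, a i

lemma vp_lt_r (hh : 0 < h) (hhk : h ≤ k) (hmono : ∀ i j, i < j → j < k → a i < a j)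
    {q r r' : ℕ} (hq : q < h) (hr : r < r') (hr' : r' ≤ k - h) :
    vp a h k q r < vp a h k q r' := by
  have := hmono (h - 1 - q + r) (h - 1 - q + r') (by omega) (by omega)
  unfold vp; linarith

lemma vp_le_r (hh : 0 < h) (hhk : h ≤ k) (hmono : ∀ i j, i < j → j < k → a i < a j)
    {q r r' : ℕ} (hq : q < h) (hr : r ≤ r') (hr' : r' ≤ k - h) :
    vp a h k q r ≤ vp a h k q r' := by
  rcases Nat.eq_or_lt_of_le hr with rfl | hlt
  · exact le_refl _
  · exact le_of_lt (vp_lt_r hh hhk hmono hq hlt hr')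

lemma vp_boundary (hh : 0 < h) (hhk : h ≤ k) {q : ℕ} (hq : q + 1 < h) :
    vp a h k q (k - h) = vp a h k (q + 1) 0 := by
  unfold vp
  rw [show h - 1 - q = (h - 1 - (q + 1)) + 1 by omega, Finset.sum_range_succ,
      sum_Ico_split a (show k - (q + 1) < k by omega),
      show k - (q + 1) + 1 = k - q by omega,
      show h - 1 - (q + 1) + 1 + (k - h) = k - (q + 1) by omega,
      show h - 1 - (q + 1) + 0 = h - 1 - (q + 1) by omega]
  ring

lemma vp_top (hh : 0 < h) (hhk : h ≤ k) :
    vp a h k (h - 1) (k - h) = ∑ i ∈ Ico (k - h) k, a i := by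
  unfold vp
  rw [show h - 1 - (h - 1) = 0 by omega, Finset.sum_range_zero,
      sum_Ico_split a (show k - h < k by omega),
      show k - h + 1 = k - (h - 1) by omega,
      show (0 : ℕ) + (k - h) = k - h by omega]
  ring

lemma vp_zero (hh : 0 < h) :
    vp a h k 0 0 = ∑ i ∈ range h, a i := by
  have e := Finset.sum_range_succ a (h - 1)
  rw [show h - 1 + 1 = h by omega] at e
  unfold vp
  rw [show h - 1 - 0 + 0 = h - 1 by omega, show h - 1 - 0 = h - 1 by omega,
      Nat.sub_zero, Finset.Ico_self, Finset.sum_empty, add_zero, ← e]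

lemma vp_mono_q (hh : 0 < h) (hhk : h ≤ k) (hmono : ∀ i j, i < j → j < k → a i < a j) :
    ∀ d q, q + d < h → vp a h k q 0 ≤ vp a h k (q + d) 0 := by
  intro d
  induction d with
  | zero => intro q _; exact le_refl _
  | succ n ih =>
    intro q hq
    calc vp a h k q 0 ≤ vp a h k (q + n) 0 := ih q (by omega)
    _ ≤ vp a h k (q + n) (k - h) := vp_le_r hh hhk hmono (by omega) (Nat.zero_le _) le_rfl
    _ = vp a h k (q + n + 1) 0 := vp_boundary hh hhk (by omega)

lemma vp_le_q (hh : 0 < h) (hhk : h ≤ k) (hmono : ∀ i j, i < j → j < k → a i < a j)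
    {q q' : ℕ} (hq : q ≤ q') (hq' : q' < h) :
    vp a h k q 0 ≤ vp a h k q' 0 := by
  obtain ⟨d, rfl⟩ := Nat.exists_eq_add_of_le hq
  exact vp_mono_q hh hhk hmono d q (by omega)

lemma vp_le_top (hh : 0 < h) (hhk : h ≤ k) (hmono : ∀ i j, i < j → j < k → a i < a j)
    {q : ℕ} (hq : q < h) :
    vp a h k q (k - h) ≤ ∑ i ∈ Ico (k - h) k, a i := by
  by_cases hq1 : q + 1 < h
  · rw [vp_boundary hh hhk hq1]
    calc vp a h k (q + 1) 0 ≤ vp a h k (h - 1) 0 := vp_le_q hh hhk hmono (by omega) (by omega)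
    _ ≤ vp a h k (h - 1) (k - h) := vp_le_r hh hhk hmono (by omega) (Nat.zero_le _) le_rfl
    _ = ∑ i ∈ Ico (k - h) k, a i := vp_top hh hhk
  · rw [show q = h - 1 by omega, vp_top hh hhk]

lemma vp_bot (hh : 0 < h) (hhk : h ≤ k) (hmono : ∀ i j, i < j → j < k → a i < a j)
    {q r : ℕ} (hq : q < h) (hr : r ≤ k - h) :
    (∑ i ∈ range h, a i) ≤ vp a h k q r := by
  calc (∑ i ∈ range h, a i) = vp a h k 0 0 := (vp_zero hh).symm
  _ ≤ vp a h k q 0 := vp_le_q hh hhk hmono (Nat.zero_le _) hq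
  _ ≤ vp a h k q r := vp_le_r hh hhk hmono hq (Nat.zero_le _) hr

lemma vp_lt_top (hh : 0 < h) (hhk : h ≤ k) (hmono : ∀ i j, i < j → j < k → a i < a j)
    {q r : ℕ} (hq : q < h) (hr : r < k - h) :
    vp a h k q r < ∑ i ∈ Ico (k - h) k, a i :=
  lt_of_lt_of_le (vp_lt_r hh hhk hmono hq hr le_rfl) (vp_le_top hh hhk hmono hq)

lemma vp_lex (hh : 0 < h) (hhk : h ≤ k) (hmono : ∀ i j, i < j → j < k → a i < a j)
    {q r q' r' : ℕ} (hq' : q' < h) (hr : r < k - h) (hr' : r' < k - h)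
    (hlex : q < q' ∨ (q = q' ∧ r < r')) : vp a h k q r < vp a h k q' r' := by
  rcases hlex with hqq | ⟨rfl, hrr⟩
  · have hq : q < h := lt_trans hqq hq'
    calc vp a h k q r < vp a h k q (k - h) := vp_lt_r hh hhk hmono hq hr le_rfl
    _ = vp a h k (q + 1) 0 := vp_boundary hh hhk (by omega)
    _ ≤ vp a h k q' 0 := vp_le_q hh hhk hmono (by omega) hq'
    _ ≤ vp a h k q' r' := vp_le_r hh hhk hmono hq' (Nat.zero_le _) (le_of_lt hr')
  · exact vp_lt_r hh hhk hmono hq' hrr (le_of_lt hr')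


def wm (a : ℕ → ℤ) (h i j : ℕ) : ℤ :=
  (∑ l ∈ Ico (h - i) h, a l) + (if j = 0 then 0 else a (j - 1))

lemma wm_lt_j (hhk : h ≤ k) (hpos : ∀ i, i < k → 0 < a i)
    (hmono : ∀ i j, i < j → j < k → a i < a j)
    {i j j' : ℕ} (hj : j < j') (hj' : j' ≤ h - i) : wm a h i j < wm a h i j' := by
  unfold wm
  rcases Nat.eq_zero_or_pos j with rfl | hj0
  · rw [if_pos rfl, if_neg (by omega)]
    have := hpos (j' - 1) (by omega)
    linarith
  · rw [if_neg (by omega), if_neg (by omega)]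
    have := hmono (j - 1) (j' - 1) (by omega) (by omega)
    linarith

lemma wm_le_j (hhk : h ≤ k) (hpos : ∀ i, i < k → 0 < a i)
    (hmono : ∀ i j, i < j → j < k → a i < a j)
    {i j j' : ℕ} (hj : j ≤ j') (hj' : j' ≤ h - i) : wm a h i j ≤ wm a h i j' := by
  rcases Nat.eq_or_lt_of_le hj with rfl | hlt
  · exact le_refl _
  · exact le_of_lt (wm_lt_j hhk hpos hmono hlt hj')

lemma wm_boundary {i : ℕ} (hi : i < h) : wm a h i (h - i) = wm a h (i + 1) 0 := by
  unfold wm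
  rw [if_neg (show h - i ≠ 0 by omega), if_pos rfl,
      sum_Ico_split a (show h - (i + 1) < h by omega),
      show h - (i + 1) + 1 = h - i by omega,
      show h - i - 1 = h - (i + 1) by omega]
  ring

lemma wm_zero : wm a h 0 0 = 0 := by
  unfold wm
  rw [Nat.sub_zero, Finset.Ico_self, Finset.sum_empty, if_pos rfl, add_zero]

lemma wm_full : wm a h h 0 = ∑ l ∈ range h, a l := by
  unfold wm
  rw [Nat.sub_self, if_pos rfl, add_zero, Finset.range_eq_Ico]

lemma wm_mono_i (hhk : h ≤ k) (hpos : ∀ i, i < k → 0 < a i)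
    (hmono : ∀ i j, i < j → j < k → a i < a j) :
    ∀ d i, i + d ≤ h → wm a h i 0 ≤ wm a h (i + d) 0 := by
  intro d
  induction d with
  | zero => intro i _; exact le_refl _
  | succ n ih =>
    intro i hi
    calc wm a h i 0 ≤ wm a h (i + n) 0 := ih i (by omega)
    _ ≤ wm a h (i + n) (h - (i + n)) :=
        wm_le_j hhk hpos hmono (Nat.zero_le _) le_rfl
    _ = wm a h (i + n + 1) 0 := wm_boundary (by omega)

lemma wm_le_i (hhk : h ≤ k) (hpos : ∀ i, i < k → 0 < a i)
    (hmono : ∀ i j, i < j → j < k → a i < a j)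
    {i i' : ℕ} (hi : i ≤ i') (hi' : i' ≤ h) : wm a h i 0 ≤ wm a h i' 0 := by
  obtain ⟨d, rfl⟩ := Nat.exists_eq_add_of_le hi
  exact wm_mono_i hhk hpos hmono d i (by omega)

lemma wm_pos (hh : 0 < h) (hhk : h ≤ k) (hpos : ∀ i, i < k → 0 < a i)
    (hmono : ∀ i j, i < j → j < k → a i < a j)
    {i j : ℕ} (hi : i < h) (hj : j < h - i) (hne : ¬(i = 0 ∧ j = 0)) :
    0 < wm a h i j := by
  rcases Nat.eq_zero_or_pos i with rfl | hi0
  · have hj0 : 0 < j := by omega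
    calc (0:ℤ) = wm a h 0 0 := wm_zero.symm
    _ < wm a h 0 j := wm_lt_j hhk hpos hmono hj0 (by omega)
  · calc (0:ℤ) = wm a h 0 0 := wm_zero.symm
    _ < wm a h 0 (h - 0) := wm_lt_j hhk hpos hmono (by omega) le_rfl
    _ = wm a h 1 0 := wm_boundary hh
    _ ≤ wm a h i 0 := wm_le_i hhk hpos hmono hi0 (le_of_lt hi)
    _ ≤ wm a h i j := wm_le_j hhk hpos hmono (Nat.zero_le _) (by omega)

lemma wm_lt_full (hhk : h ≤ k) (hpos : ∀ i, i < k → 0 < a i)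
    (hmono : ∀ i j, i < j → j < k → a i < a j)
    {i j : ℕ} (hi : i < h) (hj : j < h - i) :
    wm a h i j < ∑ l ∈ range h, a l := by
  calc wm a h i j < wm a h i (h - i) := wm_lt_j hhk hpos hmono hj le_rfl
  _ = wm a h (i + 1) 0 := wm_boundary hi
  _ ≤ wm a h h 0 := wm_le_i hhk hpos hmono (by omega) le_rfl
  _ = ∑ l ∈ range h, a l := wm_full

lemma wm_lex (hh : 0 < h) (hhk : h ≤ k) (hpos : ∀ i, i < k → 0 < a i)
    (hmono : ∀ i j, i < j → j < k → a i < a j)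
    {i j i' j' : ℕ} (hi : i < h) (hi' : i' < h) (hj : j < h - i) (hj' : j' < h - i')
    (hlex : i < i' ∨ (i = i' ∧ j < j')) : wm a h i j < wm a h i' j' := by
  rcases hlex with hii | ⟨rfl, hjj⟩
  · calc wm a h i j < wm a h i (h - i) := wm_lt_j hhk hpos hmono hj le_rfl
    _ = wm a h (i + 1) 0 := wm_boundary hi
    _ ≤ wm a h i' 0 := wm_le_i hhk hpos hmono (by omega) (le_of_lt hi')
    _ ≤ wm a h i' j' := wm_le_j hhk hpos hmono (Nat.zero_le _) (le_of_lt hj')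
  · exact wm_lt_j hhk hpos hmono hjj (le_of_lt hj')

lemma tri_sum (h : ℕ) : ∑ i ∈ range h, (h - i) = h * (h + 1) / 2 := by
  have e1 : ∑ i ∈ range h, (h - i) = ∑ i ∈ range h, (i + 1) := by
    rw [← Finset.sum_range_reflect (fun j => j + 1) h]
    refine Finset.sum_congr rfl (fun i hi => ?_)
    rw [Finset.mem_range] at hi
    omega
  have e2 : ∑ i ∈ range h, (i + 1) = (∑ i ∈ range h, i) + h := by
    rw [Finset.sum_add_distrib, Finset.sum_const, Finset.card_range, smul_eq_mul, mul_one]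
  have e3 := Finset.sum_range_id_mul_two h
  have e4 : h * (h + 1) = h * (h - 1) + 2 * h := by
    cases h with
    | zero => simp
    | succ n => simp [Nat.succ_sub_one]; ring
  omega

lemma neg_mem {h : ℕ} {A : Finset ℤ} {s : ℤ} (hs : s ∈ signedSumset h A) :
    -s ∈ signedSumset h A := by
  obtain ⟨f, h1, h2, h3, h4⟩ := hs
  refine ⟨fun x => -f x, fun x => by rcases h1 x with h | h | h <;> simp [h],
    fun x hx => by simp [h2 x hx], ?_, ?_⟩
  · simpa [abs_neg] using h3
  · rw [h4, ← Finset.sum_neg_distrib]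
    exact Finset.sum_congr rfl (fun x _ => (neg_mul _ _).symm)

lemma sss_finite (h : ℕ) (A : Finset ℤ) : (signedSumset h A).Finite := by
  apply Set.Finite.subset (Set.finite_Icc (-(∑ x ∈ A, |x|)) (∑ x ∈ A, |x|))
  rintro s ⟨f, h1, h2, h3, rfl⟩
  have hb : |∑ x ∈ A, f x * x| ≤ ∑ x ∈ A, |x| := by
    calc |∑ x ∈ A, f x * x| ≤ ∑ x ∈ A, |f x * x| := Finset.abs_sum_le_sum_abs _ _
    _ ≤ ∑ x ∈ A, |x| := by
        refine Finset.sum_le_sum (fun x hx => ?_)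
        rw [abs_mul]
        rcases h1 x with h | h | h <;> simp [h, abs_nonneg]
  rw [Set.mem_Icc]
  exact abs_le.mp hb


lemma vp_mem (hA : ∀ i, i < k → a i ∈ A)
    (hinj : ∀ i, i < k → ∀ j, j < k → a i = a j → i = j)
    (hh : 0 < h) (hhk : h ≤ k) {q r : ℕ} (hq : q < h) (hr : r ≤ k - h) :
    vp a h k q r ∈ signedSumset h A := by
  have d1 : Disjoint (range (h - 1 - q)) ({h - 1 - q + r} : Finset ℕ) := by
    simp only [Finset.disjoint_singleton_right, Finset.mem_range]
    omega
  have d2 : Disjoint (range (h - 1 - q) ∪ {h - 1 - q + r}) (Ico (k - q) k) := by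
    rw [Finset.disjoint_left]
    intro x hx hx'
    simp only [Finset.mem_union, Finset.mem_range, Finset.mem_singleton] at hx
    simp only [Finset.mem_Ico] at hx'
    omega
  have hUk : ∀ i ∈ (range (h - 1 - q) ∪ {h - 1 - q + r}) ∪ Ico (k - q) k, i < k := by
    intro i hi
    simp only [Finset.mem_union, Finset.mem_range, Finset.mem_singleton, Finset.mem_Ico] at hi
    omega
  have hcard : ((range (h - 1 - q) ∪ {h - 1 - q + r}) ∪ Ico (k - q) k).card
      + (∅ : Finset ℕ).card = h := by
    rw [Finset.card_union_of_disjoint d2, Finset.card_union_of_disjoint d1,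
        Finset.card_range, Finset.card_singleton, Nat.card_Ico, Finset.card_empty]
    omega
  have key := mem_sss hA hinj _ ∅ hUk (by simp) (Finset.disjoint_empty_right _) hcard
  rw [Finset.sum_empty, sub_zero, Finset.sum_union d2, Finset.sum_union d1,
      Finset.sum_singleton] at key
  exact key

lemma mem_sss_sub (hA : ∀ i, i < k → a i ∈ A)
    (hinj : ∀ i, i < k → ∀ j, j < k → a i = a j → i = j)
    (hhk : h ≤ k) (U : Finset ℕ) (hU : U ⊆ range h) :
    (2 * (∑ i ∈ U, a i) - ∑ i ∈ range h, a i) ∈ signedSumset h A := by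
  have hUk : ∀ i ∈ U, i < k := by
    intro i hi
    have := hU hi
    rw [Finset.mem_range] at this
    omega
  have hVk : ∀ i ∈ range h \ U, i < k := by
    intro i hi
    rw [Finset.mem_sdiff, Finset.mem_range] at hi
    omega
  have hcard : U.card + (range h \ U).card = h := by
    rw [Finset.card_sdiff_of_subset hU, Finset.card_range]
    have := Finset.card_le_card hU
    rw [Finset.card_range] at this
    omega
  have key := mem_sss hA hinj U (range h \ U) hUk hVk Finset.disjoint_sdiff hcard
  have hsum := Finset.sum_sdiff (f := a) hU
  have e : 2 * (∑ i ∈ U, a i) - ∑ i ∈ range h, a i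
      = (∑ i ∈ U, a i) - ∑ i ∈ range h \ U, a i := by linarith
  rw [e]
  exact key

lemma wm_mem (hA : ∀ i, i < k → a i ∈ A)
    (hinj : ∀ i, i < k → ∀ j, j < k → a i = a j → i = j)
    (hhk : h ≤ k) {i j : ℕ} (hi : i < h) (hj : j < h - i) :
    (2 * wm a h i j - ∑ l ∈ range h, a l) ∈ signedSumset h A := by
  rcases Nat.eq_zero_or_pos j with rfl | hj0
  · have hU : Ico (h - i) h ⊆ range h := by
      intro x hx
      rw [Finset.mem_Ico] at hx
      rw [Finset.mem_range]
      omega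
    have key := mem_sss_sub hA hinj hhk _ hU
    have e : wm a h i 0 = ∑ l ∈ Ico (h - i) h, a l := by
      unfold wm; rw [if_pos rfl, add_zero]
    rw [e]
    exact key
  · have hnot : (j - 1) ∉ Ico (h - i) h := by
      rw [Finset.mem_Ico]
      omega
    have hU : insert (j - 1) (Ico (h - i) h) ⊆ range h := by
      intro x hx
      rw [Finset.mem_insert, Finset.mem_Ico] at hx
      rw [Finset.mem_range]
      omega
    have key := mem_sss_sub hA hinj hhk _ hU
    rw [Finset.sum_insert hnot] at key
    have e : wm a h i j = a (j - 1) + ∑ l ∈ Ico (h - i) h, a l := by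
      unfold wm; rw [if_neg (by omega)]; ring
    rw [e]
    exact key


end SSS

open SSS in
theorem stmt0 (h k : ℕ) (hh : 0 < h) (hhk : h ≤ k) (A : Finset ℤ)
    (hcard : A.card = k) (hpos : ∀ a ∈ A, 0 < a) :
    2 * (h * k - h ^ 2) + h * (h + 1) / 2 + 1 ≤ (signedSumset h A).ncard := by
  classical
  set a : ℕ → ℤ := fun i => if hi : i < k then ((A.orderIsoOfFin hcard ⟨i, hi⟩ : ℤ)) else 0
    with ha
  have hA : ∀ i, i < k → a i ∈ A := by
    intro i hi
    simp only [ha, dif_pos hi]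
    exact Finset.coe_mem _
  have hmono : ∀ i j, i < j → j < k → a i < a j := by
    intro i j hij hj
    have hi : i < k := lt_trans hij hj
    simp only [ha, dif_pos hi, dif_pos hj]
    exact Subtype.coe_lt_coe.mpr
      ((A.orderIsoOfFin hcard).lt_iff_lt.mpr (Fin.mk_lt_mk.mpr hij))
  have hposa : ∀ i, i < k → 0 < a i := fun i hi => hpos _ (hA i hi)
  have hinj : ∀ i, i < k → ∀ j, j < k → a i = a j → i = j := by
    intro i hi j hj hij
    by_contra hne
    rcases Nat.lt_or_ge i j with hlt | hge
    · exact absurd hij (ne_of_lt (hmono i j hlt hj))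
    · have hlt : j < i := by omega
      exact absurd hij.symm (ne_of_lt (hmono j i hlt hi))
  set σbot : ℤ := ∑ i ∈ range h, a i with hσbot
  set σtop : ℤ := ∑ i ∈ Ico (k - h) k, a i with hσtop
  have hσbotpos : 0 < σbot := by
    rw [hσbot]
    apply Finset.sum_pos
    · intro i hi
      rw [Finset.mem_range] at hi
      exact hposa i (by omega)
    · exact Finset.nonempty_range_iff.mpr (by omega)
  set Cp : Finset ℤ :=
    insert σtop ((range h ×ˢ range (k - h)).image (fun p => vp a h k p.1 p.2)) with hCp
  set C0 : Finset ℤ :=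
    (((range h).sigma (fun i => range (h - i))) \ {⟨0, 0⟩}).image
      (fun p => 2 * wm a h p.1 p.2 - σbot) with hC0
  set Cm : Finset ℤ := Cp.image (fun x => -x) with hCm
  -- Cp facts
  have hCpS : ∀ x ∈ Cp, x ∈ signedSumset h A := by
    intro x hx
    rw [hCp, Finset.mem_insert] at hx
    rcases hx with rfl | hx
    · rw [hσtop, ← vp_top hh hhk]
      exact vp_mem hA hinj hh hhk (by omega) le_rfl
    · obtain ⟨p, hp, rfl⟩ := Finset.mem_image.mp hx
      rw [Finset.mem_product, Finset.mem_range, Finset.mem_range] at hp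
      exact vp_mem hA hinj hh hhk hp.1 (le_of_lt (by omega))
  have hCpB : ∀ x ∈ Cp, σbot ≤ x := by
    intro x hx
    rw [hCp, Finset.mem_insert] at hx
    rcases hx with rfl | hx
    · rw [hσtop, hσbot, ← vp_top hh hhk]
      exact vp_bot hh hhk hmono (by omega) le_rfl
    · obtain ⟨p, hp, rfl⟩ := Finset.mem_image.mp hx
      rw [Finset.mem_product, Finset.mem_range, Finset.mem_range] at hp
      rw [hσbot]
      exact vp_bot hh hhk hmono hp.1 (le_of_lt (by omega))
  have hnotin : σtop ∉ (range h ×ˢ range (k - h)).image (fun p : ℕ × ℕ => vp a h k p.1 p.2) := by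
    rw [Finset.mem_image]
    rintro ⟨p, hp, heq⟩
    rw [Finset.mem_product, Finset.mem_range, Finset.mem_range] at hp
    have hlt := vp_lt_top hh hhk hmono hp.1 hp.2
    rw [← hσtop] at hlt
    exact absurd heq (ne_of_lt hlt)
  have hinjvp : Set.InjOn (fun p : ℕ × ℕ => vp a h k p.1 p.2)
      ↑(range h ×ˢ range (k - h)) := by
    intro p hp p' hp' heq
    simp only [Finset.mem_coe, Finset.mem_product, Finset.mem_range] at hp hp'
    rcases lt_trichotomy p.1 p'.1 with h1 | h1 | h1
    · exact absurd heq (ne_of_lt (vp_lex hh hhk hmono hp'.1 hp.2 hp'.2 (Or.inl h1)))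
    · rcases lt_trichotomy p.2 p'.2 with h2 | h2 | h2
      · exact absurd heq (ne_of_lt (vp_lex hh hhk hmono hp'.1 hp.2 hp'.2 (Or.inr ⟨h1, h2⟩)))
      · exact Prod.ext h1 h2
      · exact absurd heq.symm
          (ne_of_lt (vp_lex hh hhk hmono hp.1 hp'.2 hp.2 (Or.inr ⟨h1.symm, h2⟩)))
    · exact absurd heq.symm (ne_of_lt (vp_lex hh hhk hmono hp.1 hp'.2 hp.2 (Or.inl h1)))
  have cardCp : Cp.card = h * (k - h) + 1 := by
    rw [hCp, Finset.card_insert_of_notMem hnotin, Finset.card_image_of_injOn hinjvp,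
      Finset.card_product, Finset.card_range, Finset.card_range]
  -- C0 facts
  have hC0S : ∀ x ∈ C0, x ∈ signedSumset h A := by
    intro x hx
    rw [hC0] at hx
    obtain ⟨p, hp, rfl⟩ := Finset.mem_image.mp hx
    obtain ⟨i, j⟩ := p
    simp only [Finset.mem_sdiff, Finset.mem_sigma, Finset.mem_range] at hp
    rw [hσbot]
    exact wm_mem hA hinj hhk hp.1.1 hp.1.2
  have hC0B : ∀ x ∈ C0, -σbot < x ∧ x < σbot := by
    intro x hx
    rw [hC0] at hx
    obtain ⟨p, hp, rfl⟩ := Finset.mem_image.mp hx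
    obtain ⟨i, j⟩ := p
    simp only [Finset.mem_sdiff, Finset.mem_sigma, Finset.mem_range,
      Finset.mem_singleton] at hp
    have hne : ¬(i = 0 ∧ j = 0) := by
      rintro ⟨rfl, rfl⟩
      exact hp.2 rfl
    have h1 := wm_pos hh hhk hposa hmono hp.1.1 hp.1.2 hne
    have h2 := wm_lt_full hhk hposa hmono hp.1.1 hp.1.2
    rw [← hσbot] at h2
    dsimp only
    constructor <;> linarith
  have hinjwm : Set.InjOn (fun p : (_ : ℕ) × ℕ => 2 * wm a h p.1 p.2 - σbot)
      ↑(((range h).sigma (fun i => range (h - i))) \ {⟨0, 0⟩}) := by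
    intro p hp p' hp' heq
    obtain ⟨i, j⟩ := p
    obtain ⟨i', j'⟩ := p'
    simp only [Finset.mem_coe, Finset.mem_sdiff, Finset.mem_sigma, Finset.mem_range,
      Finset.mem_singleton] at hp hp'
    have heq' : wm a h i j = wm a h i' j' := by
      dsimp only at heq
      linarith
    rcases lt_trichotomy i i' with h1 | h1 | h1
    · exact absurd heq'
        (ne_of_lt (wm_lex hh hhk hposa hmono hp.1.1 hp'.1.1 hp.1.2 hp'.1.2 (Or.inl h1)))
    · subst h1
      rcases lt_trichotomy j j' with h2 | h2 | h2
      · exact absurd heq'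
          (ne_of_lt (wm_lex hh hhk hposa hmono hp.1.1 hp'.1.1 hp.1.2 hp'.1.2
            (Or.inr ⟨rfl, h2⟩)))
      · subst h2; rfl
      · exact absurd heq'.symm
          (ne_of_lt (wm_lex hh hhk hposa hmono hp'.1.1 hp.1.1 hp'.1.2 hp.1.2
            (Or.inr ⟨rfl, h2⟩)))
    · exact absurd heq'.symm
        (ne_of_lt (wm_lex hh hhk hposa hmono hp'.1.1 hp.1.1 hp'.1.2 hp.1.2 (Or.inl h1)))
  have hsub0 : ({⟨0, 0⟩} : Finset ((_ : ℕ) × ℕ)) ⊆ (range h).sigma (fun i => range (h - i)) := by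
    exact Finset.singleton_subset_iff.mpr
      (Finset.mem_sigma.mpr ⟨Finset.mem_range.mpr hh,
        Finset.mem_range.mpr (show (0:ℕ) < h - 0 by omega)⟩)
  have cardC0 : C0.card = h * (h + 1) / 2 - 1 := by
    rw [hC0, Finset.card_image_of_injOn hinjwm, Finset.card_sdiff_of_subset hsub0, Finset.card_sigma,
      Finset.card_singleton]
    simp only [Finset.card_range]
    rw [tri_sum h]
  -- Cm facts
  have hCmS : ∀ x ∈ Cm, x ∈ signedSumset h A := by
    intro x hx
    rw [hCm] at hx
    obtain ⟨y, hy, rfl⟩ := Finset.mem_image.mp hx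
    exact neg_mem (hCpS y hy)
  have hCmB : ∀ x ∈ Cm, x ≤ -σbot := by
    intro x hx
    rw [hCm] at hx
    obtain ⟨y, hy, rfl⟩ := Finset.mem_image.mp hx
    have := hCpB y hy
    linarith
  have cardCm : Cm.card = h * (k - h) + 1 := by
    rw [hCm, Finset.card_image_of_injective _ neg_injective, cardCp]
  -- disjointness
  have hd1 : Disjoint Cm C0 := by
    rw [Finset.disjoint_left]
    intro x hx hx'
    have h1 := hCmB x hx
    have h2 := (hC0B x hx').1
    linarith
  have hd2 : Disjoint (Cm ∪ C0) Cp := by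
    rw [Finset.disjoint_left]
    intro x hx hx'
    have h3 := hCpB x hx'
    rw [Finset.mem_union] at hx
    rcases hx with hx | hx
    · have := hCmB x hx
      linarith
    · have := (hC0B x hx).2
      linarith
  have hTS : ↑((Cm ∪ C0) ∪ Cp) ⊆ signedSumset h A := by
    intro x hx
    rw [Finset.mem_coe, Finset.mem_union, Finset.mem_union] at hx
    rcases hx with (hx | hx) | hx
    exacts [hCmS x hx, hC0S x hx, hCpS x hx]
  have hle := Set.ncard_le_ncard hTS (sss_finite h A)
  rw [Set.ncard_coe_finset, Finset.card_union_of_disjoint hd2,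
    Finset.card_union_of_disjoint hd1, cardCm, cardC0, cardCp] at hle
  have e1 : h * k = h * (k - h) + h * h := by
    rw [← Nat.mul_add, Nat.sub_add_cancel hhk]
  have e2 : 1 * 2 ≤ h * (h + 1) := Nat.mul_le_mul hh (by omega)
  rw [pow_two]
  generalize h * (k - h) = P at e1 hle
  generalize h * k = M at e1 ⊢
  generalize h * h = HH at e1 ⊢
  generalize h * (h + 1) = Q at e2 hle ⊢
  omega
end

section
/- Let h and k be positive integers with h ≤ k, and let A be a set of k nonnegative integers with 0 ∈ A. Then |h^∧_± A| ≥ 2(hk − h²) + h(h−1)/2 + 1. -/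
open Finset

/-!
Let `T` be an `h`-subset of `A` of least sum `S`. The `h`-fold sums of `A` other than `S`
give at least `h(k - h)` signed sums above `S` and, negated, as many below `-S`; the signed sums
`2 ∑ P - S` with `P` running over the subsets of the (at least `h - 1`) positive elements of `T`
give at least `h(h - 1)/2 + 1` more in `[-S, S]`. The two counts are the classical lower bounds
for restricted sumsets and for subset sums of positive elements.
-/

open Pointwise

lemma Finset.card_union_of_forall_lt {α : Type*} [Preorder α] [DecidableEq α] {s t : Finset α}
    (hst : ∀ x ∈ s, ∀ y ∈ t, x < y) : #(s ∪ t) = #s + #t :=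
  card_union_of_disjoint (disjoint_left.2 fun x hs ht => (hst x hs x ht).false)

section Sumsets

variable {α : Type*} [DecidableEq α] [AddCommMonoid α]

def restrictedSumset (h : ℕ) (B : Finset α) : Finset α :=
  (B.powersetCard h).image fun T => ∑ a ∈ T, a

def subsetSums (B : Finset α) : Finset α :=
  B.powerset.image fun T => ∑ a ∈ T, a

lemma mem_restrictedSumset {h : ℕ} {B : Finset α} {x : α} :
    x ∈ restrictedSumset h B ↔ ∃ T ⊆ B, #T = h ∧ ∑ a ∈ T, a = x := by
  simp [restrictedSumset, mem_powersetCard, and_assoc]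

lemma mem_subsetSums {B : Finset α} {x : α} :
    x ∈ subsetSums B ↔ ∃ T ⊆ B, ∑ a ∈ T, a = x := by
  simp [subsetSums]

end Sumsets

section LinearOrderedAddCommGroup

variable {α : Type*} [AddCommGroup α] [LinearOrder α] [IsOrderedAddMonoid α]

/-- Removing the largest element `M`: if `T` is an `h`-subset of the rest with maximal sum,
the `h` sums `∑ T - b + M` (`b ∈ T`) exceed every `h`-fold sum of the rest. -/
theorem card_restrictedSumset (B : Finset α) {h : ℕ} (hh : h ≤ #B) :
    h * (#B - h) + 1 ≤ #(restrictedSumset h B) := by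
  induction B using Finset.induction_on_max generalizing h with
  | empty => simp_all [restrictedSumset]
  | insert M B hlt ih =>
    have hM : M ∉ B := fun hM => (hlt M hM).false
    rw [card_insert_of_notMem hM] at hh ⊢
    rcases hh.eq_or_lt with rfl | hh
    · simpa using ⟨_, mem_restrictedSumset.2 ⟨_, subset_rfl, card_insert_of_notMem hM, rfl⟩⟩
    have hle : h ≤ #B := Nat.lt_succ_iff.1 hh
    obtain ⟨T, hT, hTmax⟩ := exists_max_image (B.powersetCard h) (fun T => ∑ a ∈ T, a)
      (powersetCard_nonempty.2 hle)
    rw [mem_powersetCard] at hT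
    set new := T.image fun b => ∑ a ∈ T, a - b + M
    have hnew : #new = h := by
      rw [card_image_of_injective _ fun b c hbc => by simpa using hbc, hT.2]
    have hsub : restrictedSumset h B ∪ new ⊆ restrictedSumset h (insert M B) := by
      refine union_subset (image_subset_image (powersetCard_mono (subset_insert M B))) ?_
      simp only [new, image_subset_iff, mem_restrictedSumset]
      intro b hb
      have hMT : M ∉ T.erase b := fun hMT => hM (hT.1 (mem_of_mem_erase hMT))
      refine ⟨insert M (T.erase b), insert_subset_insert M ((erase_subset b T).trans hT.1), ?_, ?_⟩
      · rw [card_insert_of_notMem hMT, card_erase_of_mem hb, hT.2,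
          Nat.sub_add_cancel (card_pos.2 ⟨b, hb⟩ |>.trans_eq hT.2)]
      · rw [sum_insert hMT, sum_erase_eq_sub hb, add_comm]
    have hsep : ∀ x ∈ restrictedSumset h B, ∀ y ∈ new, x < y := by
      simp only [new, mem_image, mem_restrictedSumset]
      rintro _ ⟨U, hU, hUc, rfl⟩ _ ⟨b, hb, rfl⟩
      refine (hTmax U (mem_powersetCard.2 ⟨hU, hUc⟩)).trans_lt ?_
      rw [sub_add_comm]
      exact lt_add_of_pos_left _ (sub_pos.2 (hlt b (hT.1 hb)))
    calc h * (#B + 1 - h) + 1 = h * (#B - h) + 1 + h := by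
          rw [Nat.sub_add_comm hle, Nat.mul_add_one]; ring
      _ ≤ #(restrictedSumset h B) + #new := by rw [hnew]; gcongr; exact ih hle
      _ = #(restrictedSumset h B ∪ new) := (card_union_of_forall_lt hsep).symm
      _ ≤ _ := card_le_card hsub

/-- Removing the largest element `M`, the `#B + 1` sums `∑ B + M - b` (`b ∈ insert 0 B`)
exceed every subset sum of the rest. -/
theorem card_subsetSums {B : Finset α} (hB : ∀ b ∈ B, 0 < b) :
    (#B + 1).choose 2 + 1 ≤ #(subsetSums B) := by
  induction B using Finset.induction_on_max with
  | empty => simp [subsetSums]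
  | insert M B hlt ih =>
    have hM : M ∉ B := fun hM => (hlt M hM).false
    have hMpos : 0 < M := hB M (mem_insert_self M B)
    have hBpos : ∀ b ∈ B, 0 < b := fun b hb => hB b (mem_insert_of_mem hb)
    have h0 : (0 : α) ∉ B := fun h0 => (hBpos 0 h0).false
    rw [card_insert_of_notMem hM]
    set new := (insert 0 B).image fun b => ∑ a ∈ B, a + M - b
    have hnew : #new = #B + 1 := by
      rw [card_image_of_injective _ fun b c hbc => by simpa using hbc, card_insert_of_notMem h0]
    have hsub : subsetSums B ∪ new ⊆ subsetSums (insert M B) := by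
      refine union_subset (image_subset_image (powerset_mono.2 (subset_insert M B))) ?_
      simp only [new, image_subset_iff, mem_subsetSums]
      intro b hb
      have hMB : M ∉ B.erase b := fun hMB => hM (mem_of_mem_erase hMB)
      refine ⟨insert M (B.erase b), insert_subset_insert M (erase_subset b B), ?_⟩
      rw [sum_insert hMB]
      rcases mem_insert.1 hb with rfl | hb
      · rw [erase_eq_of_notMem h0]; abel
      · rw [sum_erase_eq_sub hb]; abel
    have hsep : ∀ x ∈ subsetSums B, ∀ y ∈ new, x < y := by
      simp only [new, mem_image, mem_subsetSums]
      rintro _ ⟨U, hU, rfl⟩ _ ⟨b, hb, rfl⟩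
      have hUB : ∑ a ∈ U, a ≤ ∑ a ∈ B, a :=
        sum_le_sum_of_subset_of_nonneg hU fun a ha _ => (hBpos a ha).le
      have hbM : b < M := by
        rcases mem_insert.1 hb with rfl | hb
        exacts [hMpos, hlt b hb]
      refine hUB.trans_lt ?_
      rw [add_sub_assoc]
      exact lt_add_of_pos_right _ (sub_pos.2 hbM)
    calc (#B + 1 + 1).choose 2 + 1 = (#B + 1).choose 2 + 1 + (#B + 1) := by
          rw [Nat.choose_succ_succ', Nat.choose_one_right]; ring
      _ ≤ #(subsetSums B) + #new := by rw [hnew]; gcongr; exact ih hBpos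
      _ = #(subsetSums B ∪ new) := (card_union_of_forall_lt hsep).symm
      _ ≤ _ := card_le_card hsub

end LinearOrderedAddCommGroup

lemma sum_mul_mem_signedSumset {A T : Finset ℤ} (hT : T ⊆ A) {ε : ℤ → ℤ}
    (hε : ∀ a ∈ T, ε a = -1 ∨ ε a = 1) : ∑ a ∈ T, ε a * a ∈ signedSumset #T A := by
  have hTA : A ∩ T = T := inter_eq_right.2 hT
  refine ⟨fun a => if a ∈ T then ε a else 0, fun a => ?_, fun a ha => if_neg fun h => ha (hT h),
    ?_, ?_⟩
  · dsimp only
    split_ifs with ha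
    · rcases hε a ha with h | h <;> simp [h]
    · simp
  · have : ∀ a ∈ A, |if a ∈ T then ε a else 0| = if a ∈ T then 1 else 0 := by
      intro a _
      split_ifs with ha
      · rcases hε a ha with h | h <;> simp [h]
      · simp
    rw [sum_congr rfl this, sum_ite_mem, hTA]
    simp
  · simp only [ite_mul, zero_mul]
    rw [sum_ite_mem, hTA]

lemma neg_mem_signedSumset {h : ℕ} {A : Finset ℤ} {x : ℤ} (hx : x ∈ signedSumset h A) :
    -x ∈ signedSumset h A := by
  obtain ⟨f, hf, hfA, hfh, rfl⟩ := hx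
  refine ⟨-f, fun a => ?_, fun a ha => by simp [hfA a ha], by simpa using hfh, by simp⟩
  rcases hf a with h | h | h <;> simp [h]

lemma restrictedSumset_subset_signedSumset (h : ℕ) (A : Finset ℤ) :
    ↑(restrictedSumset h A) ⊆ signedSumset h A := by
  intro x hx
  obtain ⟨T, hT, rfl, rfl⟩ := mem_restrictedSumset.1 hx
  simpa using sum_mul_mem_signedSumset hT (ε := fun _ => 1) fun _ _ => Or.inr rfl

lemma two_mul_sum_sub_sum_mem_signedSumset {A T P : Finset ℤ} (hT : T ⊆ A) (hP : P ⊆ T) :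
    2 * ∑ a ∈ P, a - ∑ a ∈ T, a ∈ signedSumset #T A := by
  have h := sum_mul_mem_signedSumset hT (ε := fun a => if a ∈ P then 1 else -1)
    fun a _ => by split_ifs <;> simp
  have hval : ∑ a ∈ T, (if a ∈ P then 1 else -1) * a = 2 * ∑ a ∈ P, a - ∑ a ∈ T, a := by
    have : ∀ a ∈ T, (if a ∈ P then 1 else -1) * a = 2 * (if a ∈ P then a else 0) - a := by
      intro a _
      split_ifs <;> ring
    rw [sum_congr rfl this, sum_sub_distrib, ← mul_sum, sum_ite_mem, inter_eq_right.2 hP]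
  rwa [hval] at h

lemma signedSumset_finite (h : ℕ) (A : Finset ℤ) : (signedSumset h A).Finite := by
  refine (Set.finite_Icc (-∑ a ∈ A, |a|) (∑ a ∈ A, |a|)).subset ?_
  rintro _ ⟨f, hf, -, -, rfl⟩
  have hbound : |∑ a ∈ A, f a * a| ≤ ∑ a ∈ A, |a| := by
    refine (abs_sum_le_sum_abs _ _).trans (sum_le_sum fun a _ => ?_)
    rw [abs_mul]
    refine mul_le_of_le_one_left (abs_nonneg a) ?_
    rcases hf a with h | h | h <;> simp [h]
  exact abs_le.1 hbound

lemma exists_subset_signedSumset_inter_Ioi {A T : Finset ℤ} (hT : T ⊆ A)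
    (hTmin : ∀ U ∈ A.powersetCard #T, ∑ a ∈ T, a ≤ ∑ a ∈ U, a) :
    ∃ P : Finset ℤ, #T * (#A - #T) ≤ #P ∧
      ↑P ⊆ signedSumset #T A ∩ Set.Ioi (∑ a ∈ T, a) := by
  refine ⟨(restrictedSumset #T A).erase (∑ a ∈ T, a),
    (Nat.le_sub_one_of_lt (card_restrictedSumset A (card_le_card hT))).trans
      pred_card_le_card_erase, fun x hx => ⟨?_, ?_⟩⟩
  · exact restrictedSumset_subset_signedSumset #T A (mem_of_mem_erase hx)
  · obtain ⟨U, hU, hUc, rfl⟩ := mem_restrictedSumset.1 (mem_of_mem_erase hx)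
    exact (hTmin U (mem_powersetCard.2 ⟨hU, hUc⟩)).lt_of_ne' (ne_of_mem_erase hx)

lemma exists_subset_signedSumset_inter_Icc {A T : Finset ℤ} (hT : T ⊆ A)
    (hnonneg : ∀ a ∈ T, 0 ≤ a) :
    ∃ M : Finset ℤ, (#T).choose 2 + 1 ≤ #M ∧
      ↑M ⊆ signedSumset #T A ∩ Set.Icc (-∑ a ∈ T, a) (∑ a ∈ T, a) := by
  set S := ∑ a ∈ T, a
  refine ⟨(subsetSums (T.erase 0)).image fun u => 2 * u - S, ?_, ?_⟩
  · rw [card_image_of_injective _ fun u v huv => by simpa using huv]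
    refine le_trans ?_ (card_subsetSums fun a ha => ?_)
    · have : #T ≤ #(T.erase 0) + 1 := by have := pred_card_le_card_erase (s := T) (a := 0); omega
      gcongr
    · exact (hnonneg a (mem_of_mem_erase ha)).lt_of_ne' (ne_of_mem_erase ha)
  · intro x hx
    obtain ⟨_, hu, rfl⟩ := mem_image.1 hx
    obtain ⟨P, hP, rfl⟩ := mem_subsetSums.1 hu
    have hPT := hP.trans (erase_subset 0 T)
    have h0P : 0 ≤ ∑ a ∈ P, a := sum_nonneg fun a ha => hnonneg a (hPT ha)
    have hPS : ∑ a ∈ P, a ≤ S := sum_le_sum_of_subset_of_nonneg hPT fun a ha _ => hnonneg a ha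
    exact ⟨two_mul_sum_sub_sum_mem_signedSumset hT hPT, Set.mem_Icc.2 ⟨by linarith, by linarith⟩⟩

lemma two_mul_card_add_card_le_ncard_signedSumset {h : ℕ} {A P M : Finset ℤ} {S : ℤ}
    (hS : 0 ≤ S) (hP : ↑P ⊆ signedSumset h A ∩ Set.Ioi S)
    (hM : ↑M ⊆ signedSumset h A ∩ Set.Icc (-S) S) :
    2 * #P + #M ≤ (signedSumset h A).ncard := by
  have hsub : ↑(-P ∪ M ∪ P) ⊆ signedSumset h A := by
    intro x hx
    simp only [coe_union, Set.mem_union, mem_coe, mem_neg'] at hx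
    rcases hx with (hx | hx) | hx
    exacts [by simpa using neg_mem_signedSumset (hP hx).1, (hM hx).1, (hP hx).1]
  have hPgt : ∀ x ∈ P, S < x := fun x hx => (hP hx).2
  have hMbd : ∀ x ∈ M, -S ≤ x ∧ x ≤ S := fun x hx => (hM hx).2
  calc 2 * #P + #M = #(-P) + #M + #P := by rw [card_neg]; ring
    _ = #(-P ∪ M ∪ P) := by
        rw [card_union_of_forall_lt, card_union_of_forall_lt]
        · intro x hx y hy
          linarith [hPgt _ (mem_neg'.1 hx), (hMbd y hy).1]
        · intro x hx y hy
          rcases mem_union.1 hx with hx | hx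
          · linarith [hPgt _ (mem_neg'.1 hx), hPgt y hy]
          · linarith [(hMbd x hx).2, hPgt y hy]
    _ ≤ _ := by
        rw [← Set.ncard_coe_finset]
        exact Set.ncard_le_ncard hsub (signedSumset_finite h A)

theorem stmt1_general (h k : ℕ) (hhk : h ≤ k) (A : Finset ℤ)
    (hcard : A.card = k) (hnonneg : ∀ a ∈ A, 0 ≤ a) :
    2 * (h * k - h ^ 2) + h * (h - 1) / 2 + 1 ≤ (signedSumset h A).ncard := by
  subst hcard
  obtain ⟨T, hT, hTmin⟩ := exists_min_image (A.powersetCard h) (fun T => ∑ a ∈ T, a)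
    (powersetCard_nonempty.2 hhk)
  obtain ⟨hTA, rfl⟩ := mem_powersetCard.1 hT
  have hTnonneg : ∀ a ∈ T, 0 ≤ a := fun a ha => hnonneg a (hTA ha)
  obtain ⟨P, hPcard, hP⟩ := exists_subset_signedSumset_inter_Ioi hTA hTmin
  obtain ⟨M, hMcard, hM⟩ := exists_subset_signedSumset_inter_Icc hTA hTnonneg
  calc 2 * (#T * #A - #T ^ 2) + #T * (#T - 1) / 2 + 1 ≤ 2 * #P + #M := by
        rw [sq, ← Nat.mul_sub, ← Nat.choose_two_right]; omega
    _ ≤ _ := two_mul_card_add_card_le_ncard_signedSumset (sum_nonneg hTnonneg) hP hM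

theorem stmt1 (h k : ℕ) (hh : 0 < h) (hhk : h ≤ k) (A : Finset ℤ)
    (hcard : A.card = k) (hnonneg : ∀ a ∈ A, 0 ≤ a) (h0 : (0 : ℤ) ∈ A) :
    2 * (h * k - h ^ 2) + h * (h - 1) / 2 + 1 ≤ (signedSumset h A).ncard :=
  stmt1_general h k hhk A hcard hnonneg
end

section
/- Let h ≥ 3 be an integer and let A be an (h+1)-term arithmetic progression of positive integers with common difference d. Then |h^∧_± A| = (h+1)² if and only if d = 2·min(A). -/
open Finset

lemma gauss (m : ℕ) : 2 * ∑ i ∈ range (m+1), (i:ℤ) = (m:ℤ)*((m:ℤ)+1) := by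
  induction m with
  | zero => simp
  | succ n ih => rw [sum_range_succ, mul_add, ih]; push_cast; ring

def okC (m p : ℕ) (u : ℤ) : Prop :=
  ∃ P ∈ (range (m+1)).powerset, ∃ N ∈ (range (m+1)).powerset, Disjoint P N ∧
    P.card = p ∧ N.card = m - p ∧ (∑ i ∈ P, (i:ℤ)) - (∑ i ∈ N, (i:ℤ)) = u

instance (m p : ℕ) (u : ℤ) : Decidable (okC m p u) := by unfold okC; infer_instance

lemma exists_PN : ∀ m : ℕ, 3 ≤ m → ∀ p : ℕ, p ≤ m → ∀ u : ℤ,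
    2*(p:ℤ)^2 - (m:ℤ)*((m:ℤ)+1) ≤ 2*u → 2*u ≤ (m:ℤ)*((m:ℤ)+1) - 2*((m:ℤ)-(p:ℤ))^2 →
    okC m p u := by
  intro m hm
  induction m, hm using Nat.le_induction with
  | base =>
    intro p hp u h1 h2
    interval_cases p <;> norm_num at h1 h2
    · have l1 : -6 ≤ u := by omega
      have l2 : u ≤ -3 := by omega
      interval_cases u <;> decide
    · have l1 : -5 ≤ u := by omega
      have l2 : u ≤ 2 := by omega
      interval_cases u <;> decide
    · have l1 : -2 ≤ u := by omega
      have l2 : u ≤ 5 := by omega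
      interval_cases u <;> decide
    · have l1 : 3 ≤ u := by omega
      have l2 : u ≤ 6 := by omega
      interval_cases u <;> decide
  | succ m hm ih =>
    intro p hp u h1 h2
    have hm3 : (3:ℤ) ≤ (m:ℤ) := by exact_mod_cast hm
    push_cast at h1 h2
    have pkg : ∀ (P N : Finset ℕ), P ⊆ range (m+2) → N ⊆ range (m+2) → Disjoint P N →
        P.card = p → N.card = (m+1) - p → (∑ i ∈ P, (i:ℤ)) - (∑ i ∈ N, (i:ℤ)) = u →
        okC (m+1) p u := by
      intro P N h1' h2' h3' h4' h5' h6'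
      exact ⟨P, mem_powerset.2 h1', N, mem_powerset.2 h2', h3', h4', h5', h6'⟩
    rcases Nat.eq_or_lt_of_le hp with hpm | hpm
    · -- p = m+1 : all plus
      subst hpm
      push_cast at h1 h2
      obtain ⟨c, hc⟩ : ∃ c : ℤ, (m:ℤ)*((m:ℤ)+1) = c + c := by
        obtain ⟨c, hc⟩ := Int.even_mul_succ_self (m:ℤ); exact ⟨c, hc⟩
      by_cases htop : 2*u = (m:ℤ)*((m:ℤ)+1)
      · refine pkg (range (m+1)) ∅ (range_subset_range.2 (by omega)) (by simp) (by simp)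
          (by simp) (by simp) ?_
        have := gauss m; simp; linarith
      · have hb : (m:ℤ)*((m:ℤ)+1) + 2 ≤ 2*u := by
          have e1 : (m:ℤ)*((m:ℤ)+1) ≤ 2*u := by nlinarith
          rw [hc] at e1 htop ⊢; omega
        have b1 : 2*((m:ℤ))^2 - (m:ℤ)*((m:ℤ)+1) ≤ 2*(u - ((m:ℤ)+1)) := by nlinarith
        have b2 : 2*(u - ((m:ℤ)+1)) ≤ (m:ℤ)*((m:ℤ)+1) - 2*((m:ℤ)-(m:ℤ))^2 := by nlinarith
        obtain ⟨P, hP, N, hN, hdis, hcP, hcN, hsum⟩ := ih m le_rfl (u - ((m:ℤ)+1)) b1 b2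
        rw [mem_powerset] at hP hN
        have hmP : m+1 ∉ P := fun hcon => by have := hP hcon; simp at this
        refine pkg (insert (m+1) P) N
          (insert_subset (by simp) (hP.trans (range_subset_range.2 (by omega))))
          (hN.trans (range_subset_range.2 (by omega))) ?_ ?_ (by omega) ?_
        · refine disjoint_left.2 ?_
          intro x hx hxN
          rcases mem_insert.1 hx with rfl | hxP
          · have := hN hxN; simp at this
          · exact (disjoint_left.1 hdis hxP) hxN
        · rw [card_insert_of_notMem hmP, hcP]
        · rw [sum_insert hmP]; push_cast; linarith
    · have hpm' : p ≤ m := by omega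
      have hpmZ : (p:ℤ) ≤ m := by exact_mod_cast hpm'
      rcases Nat.eq_zero_or_pos p with rfl | hp1
      · -- p = 0
        push_cast at h1 h2
        obtain ⟨c, hc⟩ : ∃ c : ℤ, (m:ℤ)*((m:ℤ)+1) = c + c := by
          obtain ⟨c, hc⟩ := Int.even_mul_succ_self (m:ℤ); exact ⟨c, hc⟩
        by_cases hbot : 2*u = -((m:ℤ)*((m:ℤ)+1))
        · refine pkg ∅ (range (m+1)) (by simp) (range_subset_range.2 (by omega)) (by simp)
            (by simp) (by simp) ?_
          have := gauss m; simp; linarith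
        · have hb : 2*u ≤ -((m:ℤ)*((m:ℤ)+1)) - 2 := by
            have e1 : 2*u ≤ -((m:ℤ)*((m:ℤ)+1)) := by nlinarith
            rw [hc] at e1 hbot ⊢; omega
          have b1 : 2*((0:ℕ):ℤ)^2 - (m:ℤ)*((m:ℤ)+1) ≤ 2*(u + ((m:ℤ)+1)) := by push_cast; nlinarith
          have b2 : 2*(u + ((m:ℤ)+1)) ≤ (m:ℤ)*((m:ℤ)+1) - 2*((m:ℤ)-((0:ℕ):ℤ))^2 := by
            push_cast; nlinarith
          obtain ⟨P, hP, N, hN, hdis, hcP, hcN, hsum⟩ := ih 0 (by omega) (u + ((m:ℤ)+1)) b1 b2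
          rw [mem_powerset] at hP hN
          have hmN : m+1 ∉ N := fun hcon => by have := hN hcon; simp at this
          refine pkg P (insert (m+1) N) (hP.trans (range_subset_range.2 (by omega)))
            (insert_subset (by simp) (hN.trans (range_subset_range.2 (by omega))))
            ?_ hcP ?_ ?_
          · refine disjoint_right.2 ?_
            intro x hx hxP
            rcases mem_insert.1 hx with rfl | hxN
            · have := hP hxP; simp at this
            · exact (disjoint_left.1 hdis hxP) hxN
          · rw [card_insert_of_notMem hmN, hcN]; omega
          · rw [sum_insert hmN]; push_cast; linarith
      · -- 1 ≤ p ≤ m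
        have hp1Z : (1:ℤ) ≤ (p:ℤ) := by exact_mod_cast hp1
        have hcast : ((p-1:ℕ):ℤ) = (p:ℤ) - 1 := by push_cast [Nat.cast_sub hp1]; ring
        by_cases hb : 2*((m:ℤ)+1) + 2*((p:ℤ)-1)^2 - (m:ℤ)*((m:ℤ)+1) ≤ 2*u
        · -- plus branch
          have b1 : 2*((p-1:ℕ):ℤ)^2 - (m:ℤ)*((m:ℤ)+1) ≤ 2*(u - ((m:ℤ)+1)) := by
            rw [hcast]; nlinarith
          have b2 : 2*(u - ((m:ℤ)+1)) ≤ (m:ℤ)*((m:ℤ)+1) - 2*((m:ℤ)-((p-1:ℕ):ℤ))^2 := by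
            rw [hcast]; nlinarith
          obtain ⟨P, hP, N, hN, hdis, hcP, hcN, hsum⟩ := ih (p-1) (by omega) (u - ((m:ℤ)+1)) b1 b2
          rw [mem_powerset] at hP hN
          have hmP : m+1 ∉ P := fun hcon => by have := hP hcon; simp at this
          refine pkg (insert (m+1) P) N
            (insert_subset (by simp) (hP.trans (range_subset_range.2 (by omega))))
            (hN.trans (range_subset_range.2 (by omega))) ?_ ?_ (by omega) ?_
          · refine disjoint_left.2 ?_
            intro x hx hxN
            rcases mem_insert.1 hx with rfl | hxP
            · have := hN hxN; simp at this
            · exact (disjoint_left.1 hdis hxP) hxN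
          · rw [card_insert_of_notMem hmP, hcP]; omega
          · rw [sum_insert hmP]; push_cast; linarith
        · -- minus branch
          push_neg at hb
          obtain ⟨c, hc⟩ : ∃ c : ℤ, 2*((m:ℤ)+1) + 2*((p:ℤ)-1)^2 - (m:ℤ)*((m:ℤ)+1) = c + c := by
            obtain ⟨c, hc⟩ := Int.even_mul_succ_self (m:ℤ)
            exact ⟨(m:ℤ)+1 + ((p:ℤ)-1)^2 - c, by rw [hc]; ring⟩
          have hb' : 2*u ≤ 2*((m:ℤ)+1) + 2*((p:ℤ)-1)^2 - (m:ℤ)*((m:ℤ)+1) - 2 := by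
            rw [hc] at hb ⊢; omega
          have b1 : 2*(p:ℤ)^2 - (m:ℤ)*((m:ℤ)+1) ≤ 2*(u + ((m:ℤ)+1)) := by nlinarith
          have b2 : 2*(u + ((m:ℤ)+1)) ≤ (m:ℤ)*((m:ℤ)+1) - 2*((m:ℤ)-(p:ℤ))^2 := by nlinarith
          obtain ⟨P, hP, N, hN, hdis, hcP, hcN, hsum⟩ := ih p hpm' (u + ((m:ℤ)+1)) b1 b2
          rw [mem_powerset] at hP hN
          have hmN : m+1 ∉ N := fun hcon => by have := hN hcon; simp at this
          refine pkg P (insert (m+1) N) (hP.trans (range_subset_range.2 (by omega)))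
            (insert_subset (by simp) (hN.trans (range_subset_range.2 (by omega))))
            ?_ hcP ?_ ?_
          · refine disjoint_right.2 ?_
            intro x hx hxP
            rcases mem_insert.1 hx with rfl | hxN
            · have := hP hxP; simp at this
            · exact (disjoint_left.1 hdis hxP) hxN
          · rw [card_insert_of_notMem hmN, hcN]; omega
          · rw [sum_insert hmN]; push_cast; linarith

lemma mem_sss (h : ℕ) (a d : ℤ) (hd : 0 < d) (p : ℕ) (hp : p ≤ h) (u : ℤ)
    (hok : okC h p u) :
    ((2*(p:ℤ) - (h:ℤ))*a + u*d) ∈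
      signedSumset h ((range (h + 1)).image (fun i : ℕ => a + (i : ℤ) * d)) := by
  obtain ⟨P, hP, N, hN, hdis, hcP, hcN, hsum⟩ := hok
  rw [mem_powerset] at hP hN
  set φ : ℕ → ℤ := fun i => a + (i:ℤ)*d with hφ
  have hinj : ∀ i j : ℕ, φ i = φ j → i = j := by
    intro i j hij
    simp only [hφ] at hij
    have : ((i:ℤ) - j) * d = 0 := by linarith
    rcases mul_eq_zero.1 this with h' | h'
    · exact_mod_cast sub_eq_zero.1 h'
    · omega
  refine ⟨fun x => if x ∈ P.image φ then 1 else if x ∈ N.image φ then -1 else 0,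
    ?_, ?_, ?_, ?_⟩
  · intro x; dsimp only; split_ifs <;> simp
  · intro x hx
    have h1 : x ∉ P.image φ := fun hc => hx (image_subset_image hP hc)
    have h2 : x ∉ N.image φ := fun hc => hx (image_subset_image hN hc)
    simp [h1, h2]
  · rw [Finset.sum_image (fun i _ j _ hij => hinj i j hij)]
    have key : ∀ i ∈ range (h+1),
        |if φ i ∈ P.image φ then (1:ℤ) else if φ i ∈ N.image φ then -1 else 0|
        = (if i ∈ P then (1:ℤ) else 0) + (if i ∈ N then (1:ℤ) else 0) := by
      intro i _
      have e1 : φ i ∈ P.image φ ↔ i ∈ P :=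
        ⟨fun hc => by obtain ⟨j, hj, hji⟩ := mem_image.1 hc; rwa [hinj j i hji] at hj,
         fun hc => mem_image_of_mem _ hc⟩
      have e2 : φ i ∈ N.image φ ↔ i ∈ N :=
        ⟨fun hc => by obtain ⟨j, hj, hji⟩ := mem_image.1 hc; rwa [hinj j i hji] at hj,
         fun hc => mem_image_of_mem _ hc⟩
      simp only [e1, e2]
      by_cases h1 : i ∈ P
      · have h2 : i ∉ N := disjoint_left.1 hdis h1
        simp [h1, h2]
      · by_cases h2 : i ∈ N <;> simp [h1, h2]
    rw [Finset.sum_congr rfl key, Finset.sum_add_distrib]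
    rw [Finset.sum_ite_mem, Finset.sum_ite_mem,
      inter_eq_right.2 hP, inter_eq_right.2 hN]
    simp only [sum_const, nsmul_eq_mul, mul_one, hcP, hcN]
    push_cast [Nat.cast_sub hp]
    ring
  · rw [Finset.sum_image (fun i _ j _ hij => hinj i j hij)]
    have key : ∀ i ∈ range (h+1),
        (if φ i ∈ P.image φ then (1:ℤ) else if φ i ∈ N.image φ then -1 else 0) * φ i
        = (if i ∈ P then φ i else 0) - (if i ∈ N then φ i else 0) := by
      intro i _
      have e1 : φ i ∈ P.image φ ↔ i ∈ P :=
        ⟨fun hc => by obtain ⟨j, hj, hji⟩ := mem_image.1 hc; rwa [hinj j i hji] at hj,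
         fun hc => mem_image_of_mem _ hc⟩
      have e2 : φ i ∈ N.image φ ↔ i ∈ N :=
        ⟨fun hc => by obtain ⟨j, hj, hji⟩ := mem_image.1 hc; rwa [hinj j i hji] at hj,
         fun hc => mem_image_of_mem _ hc⟩
      simp only [e1, e2]
      by_cases h1 : i ∈ P
      · have h2 : i ∉ N := disjoint_left.1 hdis h1
        simp [h1, h2]
      · by_cases h2 : i ∈ N <;> simp [h1, h2]
    rw [Finset.sum_congr rfl key, Finset.sum_sub_distrib]
    rw [Finset.sum_ite_mem, Finset.sum_ite_mem,
      inter_eq_right.2 hP, inter_eq_right.2 hN]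
    have expand : ∀ Q : Finset ℕ, (∑ i ∈ Q, φ i) = (Q.card : ℤ) * a + (∑ i ∈ Q, (i:ℤ)) * d := by
      intro Q
      simp only [hφ]
      rw [Finset.sum_add_distrib, Finset.sum_const, ← Finset.sum_mul]
      push_cast; ring
    rw [expand, expand, hcP, hcN]
    have : ((h - p : ℕ) : ℤ) = (h:ℤ) - p := by push_cast [Nat.cast_sub hp]; ring
    rw [this]
    nlinarith [hsum]

lemma cover (h : ℕ) (hh : 3 ≤ h) : ∀ p : ℕ, p ≤ h → ∀ k : ℤ, (2 ∣ (k + h)) →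
    -((h:ℤ)*((h:ℤ)+2)) ≤ k →
    k ≤ 2*(p:ℤ) - (h:ℤ) + (h:ℤ)*((h:ℤ)+1) - 2*((h:ℤ)-(p:ℤ))^2 →
    ∃ q : ℕ, q ≤ h ∧ ∃ u : ℤ, (2*(q:ℤ)^2 - (h:ℤ)*((h:ℤ)+1) ≤ 2*u) ∧
      (2*u ≤ (h:ℤ)*((h:ℤ)+1) - 2*((h:ℤ)-(q:ℤ))^2) ∧ k = 2*(q:ℤ) - (h:ℤ) + 2*u := by
  have hh3 : (3:ℤ) ≤ (h:ℤ) := by exact_mod_cast hh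
  intro p
  induction p with
  | zero =>
    intro _ k hpar hlow hhigh
    obtain ⟨c, hc⟩ := hpar
    refine ⟨0, by omega, c, ?_, ?_, by push_cast; linarith⟩
    · push_cast; nlinarith
    · push_cast at hhigh ⊢; nlinarith
  | succ p ih =>
    intro hp k hpar hlow hhigh
    have hpZ : (p:ℤ) + 1 ≤ (h:ℤ) := by exact_mod_cast hp
    push_cast at hhigh
    by_cases hk : 2*((p:ℤ)+1) - (h:ℤ) + 2*((p:ℤ)+1)^2 - (h:ℤ)*((h:ℤ)+1) ≤ k
    · obtain ⟨c, hc⟩ := hpar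
      refine ⟨p+1, hp, c - (p+1), ?_, ?_, by push_cast; linarith⟩
      · push_cast; nlinarith
      · push_cast; nlinarith
    · push_neg at hk
      apply ih (by omega) k hpar hlow
      nlinarith [hk, hpZ, hh3, mul_le_mul_of_nonneg_right hpZ (by linarith : (0:ℤ) ≤ 2*(p:ℤ)+1)]

lemma sss_char (h : ℕ) (a : ℤ) (ha : 0 < a) (s : ℤ)
    (hs : s ∈ signedSumset h ((range (h+1)).image (fun i : ℕ => a + (i:ℤ)*(2*a)))) :
    ∃ k : ℤ, 2 ∣ (k - h) ∧ |k| ≤ (h:ℤ)*((h:ℤ)+2) ∧ s = a * k := by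
  obtain ⟨f, hval, hsupp, hcard, hsum⟩ := hs
  set φ : ℕ → ℤ := fun i => a + (i:ℤ)*(2*a) with hφ
  have hinj : ∀ i ∈ range (h+1), ∀ j ∈ range (h+1), φ i = φ j → i = j := by
    intro i _ j _ hij
    simp only [hφ] at hij
    have : ((i:ℤ) - j) * (2*a) = 0 := by linarith
    rcases mul_eq_zero.1 this with h' | h'
    · exact_mod_cast sub_eq_zero.1 h'
    · omega
  have gsum : s = ∑ i ∈ range (h+1), f (φ i) * φ i := by
    rw [hsum, Finset.sum_image hinj]
  have habs : ∑ i ∈ range (h+1), |f (φ i)| = (h:ℤ) := by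
    rw [← hcard, Finset.sum_image hinj]
  refine ⟨∑ i ∈ range (h+1), f (φ i) * (2*(i:ℤ)+1), ?_, ?_, ?_⟩
  · have : (∑ i ∈ range (h+1), f (φ i) * (2*(i:ℤ)+1)) - (h:ℤ)
        = ∑ i ∈ range (h+1), (f (φ i) * (2*(i:ℤ)+1) - |f (φ i)|) := by
      rw [Finset.sum_sub_distrib, habs]
    rw [this]
    apply Finset.dvd_sum
    intro i _
    rcases hval (φ i) with e | e | e <;> rw [e] <;> simp <;> omega
  · obtain ⟨i0, hi0, hfi0⟩ : ∃ i0 ∈ range (h+1), f (φ i0) = 0 := by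
      by_contra hcon
      push_neg at hcon
      have : ∀ i ∈ range (h+1), |f (φ i)| = 1 := by
        intro i hi
        rcases hval (φ i) with e | e | e
        · rw [e]; norm_num
        · exact absurd e (hcon i hi)
        · rw [e]; norm_num
      rw [Finset.sum_congr rfl this] at habs
      simp at habs
    have b1 : |∑ i ∈ range (h+1), f (φ i) * (2*(i:ℤ)+1)|
        ≤ ∑ i ∈ range (h+1), |f (φ i)| * (2*(i:ℤ)+1) := by
      refine le_trans (Finset.abs_sum_le_sum_abs _ _) (le_of_eq ?_)
      apply Finset.sum_congr rfl
      intro i _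
      rw [abs_mul, abs_of_pos (by positivity : (0:ℤ) < 2*(i:ℤ)+1)]
    have b2 : ∑ i ∈ range (h+1), |f (φ i)| * (2*(i:ℤ)+1)
        = (∑ i ∈ range (h+1), (2*(i:ℤ)+1)) - ∑ i ∈ range (h+1), (1 - |f (φ i)|) * (2*(i:ℤ)+1) := by
      rw [← Finset.sum_sub_distrib]
      apply Finset.sum_congr rfl
      intro i _; ring
    have b3 : (1:ℤ) ≤ ∑ i ∈ range (h+1), (1 - |f (φ i)|) * (2*(i:ℤ)+1) := by
      have step : ∀ i ∈ range (h+1), (0:ℤ) ≤ (1 - |f (φ i)|) * (2*(i:ℤ)+1) := by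
        intro i _
        have : |f (φ i)| ≤ 1 := by rcases hval (φ i) with e|e|e <;> rw [e] <;> norm_num
        have : (0:ℤ) ≤ 1 - |f (φ i)| := by linarith
        positivity
      calc (1:ℤ) ≤ (1 - |f (φ i0)|) * (2*(i0:ℤ)+1) := by rw [hfi0]; simp <;> positivity
      _ ≤ ∑ i ∈ range (h+1), (1 - |f (φ i)|) * (2*(i:ℤ)+1) :=
          Finset.single_le_sum step hi0
    have b4 : ∑ i ∈ range (h+1), (2*(i:ℤ)+1) = (h:ℤ)*((h:ℤ)+1) + ((h:ℤ)+1) := by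
      rw [Finset.sum_add_distrib, ← Finset.mul_sum]
      have := gauss h
      simp [Finset.sum_const]
      push_cast
      linarith
    rw [abs_le]
    constructor
    · nlinarith [b1, b2, b3, b4, abs_nonneg (∑ i ∈ range (h+1), f (φ i) * (2*(i:ℤ)+1)),
        neg_abs_le (∑ i ∈ range (h+1), f (φ i) * (2*(i:ℤ)+1))]
    · nlinarith [b1, b2, b3, b4, le_abs_self (∑ i ∈ range (h+1), f (φ i) * (2*(i:ℤ)+1))]
  · rw [gsum, Finset.mul_sum]
    apply Finset.sum_congr rfl
    intro i _
    simp only [hφ]; ring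

noncomputable def TT (h : ℕ) : ℤ := ∑ i ∈ range (h+1), (i:ℤ)

noncomputable def cc (h p : ℕ) : ℤ := if p = h+1 then TT h else (p:ℤ)^2 - TT h

noncomputable def QQ (h : ℕ) : Finset (ℕ × ℤ) :=
  (range (h+1)).biUnion (fun p => (Finset.Icc (cc h p) (cc h (p+1))).image (fun u => (p, u)))

lemma TT2 (h : ℕ) : 2 * TT h = (h:ℤ)*((h:ℤ)+1) := gauss h

lemma ccm (h : ℕ) (hh : 3 ≤ h) : ∀ p q : ℕ, p ≤ q → q ≤ h+1 → cc h p ≤ cc h q := by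
  intro p q hpq hq
  have h2T := TT2 h
  have hh3 : (3:ℤ) ≤ (h:ℤ) := by exact_mod_cast hh
  unfold cc
  by_cases hq1 : q = h+1
  · by_cases hp1 : p = h+1
    · simp [hp1, hq1]
    · have hph : (p:ℤ) ≤ h := by
        have : p ≤ h := by omega
        exact_mod_cast this
      simp only [hq1, if_neg hp1, eq_self_iff_true, if_true]
      nlinarith
  · have hp1 : p ≠ h+1 := by omega
    have hpq' : (p:ℤ) ≤ (q:ℤ) := by exact_mod_cast hpq
    have hp0 : (0:ℤ) ≤ (p:ℤ) := by positivity
    simp only [if_neg hp1, if_neg hq1]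
    nlinarith

lemma mem_QQ (h : ℕ) (pu : ℕ × ℤ) :
    pu ∈ QQ h ↔ pu.1 ≤ h ∧ cc h pu.1 ≤ pu.2 ∧ pu.2 ≤ cc h (pu.1 + 1) := by
  obtain ⟨p, u⟩ := pu
  simp only [QQ, mem_biUnion, mem_range, mem_image, Finset.mem_Icc]
  constructor
  · rintro ⟨q, hq, w, hw, hwe⟩
    obtain ⟨rfl, rfl⟩ : q = p ∧ w = u := by
      constructor <;> [exact congrArg Prod.fst hwe; exact congrArg Prod.snd hwe]
    exact ⟨by omega, hw.1, hw.2⟩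
  · rintro ⟨h1, h2, h3⟩
    exact ⟨p, by omega, u, ⟨h2, h3⟩, rfl⟩

lemma card_QQ (h : ℕ) (hh : 3 ≤ h) : (QQ h).card = (h+1)^2 := by
  have h2T := TT2 h
  have hh3 : (3:ℤ) ≤ (h:ℤ) := by exact_mod_cast hh
  rw [QQ, card_biUnion]
  · have hcards : ∀ p ∈ range (h+1),
        (((Finset.Icc (cc h p) (cc h (p+1))).image (fun u => (p, u))).card : ℤ)
        = cc h (p+1) - cc h p + 1 := by
      intro p hp
      rw [Finset.card_image_of_injective _ (fun u w huw => congrArg Prod.snd huw)]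
      rw [Int.card_Icc]
      rw [Int.toNat_of_nonneg]
      · ring
      · have := ccm h hh p (p+1) (by omega) (by simp at hp; omega)
        linarith
    have key : ((∑ p ∈ range (h+1),
        ((Finset.Icc (cc h p) (cc h (p+1))).image (fun u => (p, u))).card : ℕ) : ℤ)
        = ((h:ℤ)+1)^2 := by
      push_cast
      rw [Finset.sum_congr rfl (fun p hp => hcards p hp)]
      have tel : ∑ p ∈ range (h+1), (cc h (p+1) - cc h p) = cc h (h+1) - cc h 0 := by
        exact Finset.sum_range_sub (fun p => cc h p) (h+1)
      rw [Finset.sum_add_distrib, tel]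
      simp [cc, Finset.sum_const]
      push_cast
      nlinarith
    have goal : ((∑ p ∈ range (h+1),
        ((Finset.Icc (cc h p) (cc h (p+1))).image (fun u => (p, u))).card : ℕ) : ℤ)
        = (((h+1)^2 : ℕ) : ℤ) := by rw [key]; push_cast; ring
    exact_mod_cast goal
  · intro p hp q hq hpq
    refine disjoint_left.2 ?_
    intro x hx hx'
    obtain ⟨u, _, rfl⟩ := mem_image.1 hx
    obtain ⟨w, _, he⟩ := mem_image.1 hx'
    exact hpq (congrArg Prod.fst he).symm

set_option maxHeartbeats 1000000 in
theorem stmt5 (h : ℕ) (hh : 3 ≤ h) (a d : ℤ) (ha : 0 < a) (hd : 0 < d)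
    (A : Finset ℤ) (hA : A = (Finset.range (h + 1)).image (fun i : ℕ => a + (i : ℤ) * d)) :
    (signedSumset h A).ncard = (h + 1) ^ 2 ↔ d = 2 * a := by
  subst hA
  have hh3 : (3:ℤ) ≤ (h:ℤ) := by exact_mod_cast hh
  have h2T := TT2 h
  constructor
  · -- hard direction: contrapositive
    intro hcard
    by_contra hne
    -- the (h+1)^2 + 1 element finset
    set x0 : ℕ × ℤ := (0, 2 - TT h) with hx0def
    set v : ℕ × ℤ → ℤ := fun pu => (2*(pu.1:ℤ) - (h:ℤ))*a + pu.2*d with hvdef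
    have hcc1 : cc h 1 = 1 - TT h := by unfold cc; rw [if_neg (by omega)]; push_cast; ring
    have hcc0 : cc h 0 = - TT h := by unfold cc; rw [if_neg (by omega)]; push_cast; ring
    have hx0Q : x0 ∉ QQ h := by
      rw [mem_QQ]
      push_neg
      intro _ _
      simp only [hx0def, zero_add, hcc1]
      linarith
    have hcardQ' : (insert x0 (QQ h)).card = (h+1)^2 + 1 := by
      rw [card_insert_of_notMem hx0Q, card_QQ h hh]
    -- key injectivity facts
    have key : ∀ p u q w, (p,u) ∈ QQ h → (q,w) ∈ QQ h → p < q →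
        ((2*(p:ℤ) - (h:ℤ))*a + u*d) ≠ ((2*(q:ℤ)-(h:ℤ))*a + w*d) := by
      intro p u q w hpu hqw hpq heq
      rw [mem_QQ] at hpu hqw
      have h1 : 2*((q:ℤ) - (p:ℤ))*a = (u - w)*d := by linear_combination -heq
      have hq1 : (p:ℤ) < (q:ℤ) := by exact_mod_cast hpq
      have hu : u ≤ cc h (p+1) := hpu.2.2
      have hw : cc h q ≤ w := hqw.2.1
      have hcc : cc h (p+1) ≤ cc h q := ccm h hh (p+1) q (by omega) (by omega)
      have huw : u ≤ w := le_trans hu (le_trans hcc hw)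
      nlinarith [mul_nonneg (by linarith : (0:ℤ) ≤ (q:ℤ)-(p:ℤ)-1) ha.le,
        mul_nonneg (by linarith : (0:ℤ) ≤ w - u) hd.le]
    have key0 : ∀ q w, (q,w) ∈ QQ h →
        ((2*((0:ℕ):ℤ) - (h:ℤ))*a + (2 - TT h)*d) ≠ ((2*(q:ℤ)-(h:ℤ))*a + w*d) := by
      intro q w hqw heq
      rw [mem_QQ] at hqw
      obtain ⟨hqh, hw1, hw2⟩ := hqw
      dsimp only at hqh hw1 hw2
      push_cast at heq
      have h1 : 2*(q:ℤ)*a = (2 - TT h - w)*d := by linear_combination -heq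
      have hccq : cc h q = (q:ℤ)^2 - TT h := by unfold cc; rw [if_neg (by omega)]
      rcases Nat.lt_or_ge q 1 with hq | hq
      · -- q = 0
        interval_cases q
        simp only [hcc1, zero_add] at hw2
        push_cast at h1
        have : (2 - TT h - w) * d = 0 := by linarith
        rcases mul_eq_zero.1 this with h' | h'
        · linarith
        · omega
      · rcases Nat.lt_or_ge q 2 with hq2 | hq2
        · -- q = 1
          interval_cases q
          have hcc2 : cc h 2 = 4 - TT h := by
            unfold cc; rw [if_neg (by omega)]; push_cast; ring
          rw [hcc1] at hw1
          rw [hcc2] at hw2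
          push_cast at h1
          rcases eq_or_lt_of_le hw1 with he | hlt
          · -- w = 1 - TT h : forces d = 2a
            have hwe : w = 1 - TT h := he.symm
            rw [hwe] at h1
            apply hne
            have : (1:ℤ) * d = 2 * a * 1 := by linarith
            linarith
          · -- w ≥ 2 - TT h
            have : 2 - TT h - w ≤ 0 := by linarith
            nlinarith [mul_nonpos_of_nonpos_of_nonneg this hd.le]
        · -- q ≥ 2
          have hq2Z : (2:ℤ) ≤ (q:ℤ) := by exact_mod_cast hq2
          rw [hccq] at hw1
          have : 2 - TT h - w ≤ -2 := by nlinarith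
          nlinarith [mul_nonneg (by linarith : (0:ℤ) ≤ (q:ℤ)-2) ha.le,
            mul_nonpos_of_nonpos_of_nonneg (by linarith : 2 - TT h - w ≤ 0) hd.le]
    have hinjv : Set.InjOn v ↑(insert x0 (QQ h)) := by
      intro x hx y hy hxy
      simp only [coe_insert, Set.mem_insert_iff, mem_coe] at hx hy
      rcases hx with rfl | hx <;> rcases hy with rfl | hy
      · rfl
      · exfalso
        obtain ⟨q, w⟩ := y
        exact key0 q w hy (by simpa [hvdef, hx0def] using hxy)
      · exfalso
        obtain ⟨q, w⟩ := x
        exact key0 q w hx (by simpa [hvdef, hx0def] using hxy.symm)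
      · obtain ⟨p, u⟩ := x
        obtain ⟨q, w⟩ := y
        rcases lt_trichotomy p q with hpq | hpq | hpq
        · exact absurd (by simpa [hvdef] using hxy) (key p u q w hx hy hpq)
        · subst hpq
          simp only [hvdef] at hxy
          have : (u - w)*d = 0 := by linear_combination hxy
          rcases mul_eq_zero.1 this with h' | h'
          · have : u = w := by linarith
            rw [this]
          · omega
        · exact absurd (by simpa [hvdef] using hxy.symm) (key q w p u hy hx hpq)
    -- membership
    have hsubv : ∀ pu ∈ insert x0 (QQ h), v pu ∈
        signedSumset h ((range (h + 1)).image (fun i : ℕ => a + (i : ℤ) * d)) := by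
      intro pu hpu
      obtain ⟨p, u⟩ := pu
      have hbounds : p ≤ h ∧ 2*(p:ℤ)^2 - (h:ℤ)*((h:ℤ)+1) ≤ 2*u ∧
          2*u ≤ (h:ℤ)*((h:ℤ)+1) - 2*((h:ℤ)-(p:ℤ))^2 := by
        rcases mem_insert.1 hpu with he | hQ
        · have hp0 : p = 0 := congrArg Prod.fst he
          have hu0 : u = 2 - TT h := congrArg Prod.snd he
          subst hp0
          refine ⟨by omega, ?_, ?_⟩ <;> rw [hu0] <;> push_cast <;> nlinarith
        · rw [mem_QQ] at hQ
          obtain ⟨hp, h1, h2⟩ := hQ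
          have hccp : cc h p = (p:ℤ)^2 - TT h := by unfold cc; rw [if_neg (by omega)]
          rw [hccp] at h1
          refine ⟨hp, by linarith, ?_⟩
          rcases Nat.lt_or_ge p h with hph | hph
          · have hccp1 : cc h (p+1) = ((p:ℤ)+1)^2 - TT h := by
              unfold cc; rw [if_neg (by omega)]; push_cast; ring
            rw [hccp1] at h2
            have hpZ : (p:ℤ) + 1 ≤ (h:ℤ) := by exact_mod_cast hph
            nlinarith [mul_nonneg (by linarith : (0:ℤ) ≤ (h:ℤ)-(p:ℤ)-1)
              (by positivity : (0:ℤ) ≤ 2*(p:ℤ)+1)]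
          · have hpeq : p = h := by omega
            rw [hpeq] at h2
            have hccp1 : cc h (h+1) = TT h := by unfold cc; rw [if_pos rfl]
            rw [hccp1] at h2
            have hz : ((h:ℤ)-(p:ℤ))^2 = 0 := by rw [hpeq]; ring
            rw [hz]
            linarith
      obtain ⟨hp, hb1, hb2⟩ := hbounds
      have hok := exists_PN h hh p hp u hb1 hb2
      simpa [hvdef] using mem_sss h a d hd p hp u hok
    have hsub : ↑((insert x0 (QQ h)).image v) ⊆
        signedSumset h ((range (h + 1)).image (fun i : ℕ => a + (i : ℤ) * d)) := by
      intro s hs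
      simp only [coe_image, Set.mem_image, mem_coe] at hs
      obtain ⟨pu, hpu, rfl⟩ := hs
      exact hsubv pu hpu
    have hcardF : ((insert x0 (QQ h)).image v).card = (h+1)^2 + 1 := by
      rw [Finset.card_image_of_injOn hinjv, hcardQ']
    rcases (signedSumset h ((range (h + 1)).image (fun i : ℕ => a + (i : ℤ) * d))).finite_or_infinite with hf | hf
    · have hle := Set.ncard_le_ncard hsub hf
      rw [Set.ncard_coe_finset, hcardF, hcard] at hle
      omega
    · rw [Set.Infinite.ncard hf] at hcard
      have : 0 < (h+1)^2 := by positivity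
      omega
  · -- easy direction: d = 2a
    intro hd2
    subst hd2
    obtain ⟨c, hc⟩ : ∃ c : ℤ, (h:ℤ)*((h:ℤ)+1) = c + c := by
      obtain ⟨c, hc⟩ := Int.even_mul_succ_self (h:ℤ); exact ⟨c, hc⟩
    have hNcast : (((h+1)^2 : ℕ) : ℤ) = 2*c + (h:ℤ) + 1 := by push_cast; nlinarith
    have hset : signedSumset h ((range (h + 1)).image (fun i : ℕ => a + (i : ℤ) * (2*a)))
        = ↑((range ((h+1)^2)).image (fun j : ℕ => a * (2*(j:ℤ) - (h:ℤ)*((h:ℤ)+2)))) := by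
      ext s
      constructor
      · intro hs
        obtain ⟨k, hpar, hbnd, rfl⟩ := sss_char h a ha s hs
        rw [abs_le] at hbnd
        obtain ⟨e, he⟩ := hpar
        simp only [coe_image, Set.mem_image, mem_coe, mem_range]
        refine ⟨(e + h + c).toNat, ?_, ?_⟩
        · have h1 : ((e + h + c).toNat : ℤ) = e + h + c := by
            rw [Int.toNat_of_nonneg]; nlinarith
          have h2 : e + h + c < 2*c + h + 1 := by nlinarith
          omega
        · have h1 : ((e + h + c).toNat : ℤ) = e + h + c := by
            rw [Int.toNat_of_nonneg]; nlinarith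
          rw [h1]
          have : k = 2*e + h := by linarith
          rw [this]
          ring_nf
          nlinarith [hc]
      · intro hs
        simp only [coe_image, Set.mem_image, mem_coe, mem_range] at hs
        obtain ⟨j, hj, rfl⟩ := hs
        set k : ℤ := 2*(j:ℤ) - (h:ℤ)*((h:ℤ)+2) with hk
        have hjZ : (j:ℤ) < ((h+1)^2 : ℕ) := by exact_mod_cast hj
        rw [hNcast] at hjZ
        have hj0 : (0:ℤ) ≤ (j:ℤ) := by positivity
        obtain ⟨q, hq, u, hu1, hu2, hke⟩ :=
          cover h hh h le_rfl k ⟨(j:ℤ) - c, by rw [hk]; linarith⟩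
            (by rw [hk]; linarith)
            (by rw [hk]; nlinarith)
        have hok := exists_PN h hh q hq u hu1 hu2
        have := mem_sss h a (2*a) (by linarith) q hq u hok
        have heq : (2*(q:ℤ) - (h:ℤ))*a + u*(2*a) = a * k := by
          rw [hke]; ring
        rwa [heq] at this
    rw [hset, Set.ncard_coe_finset]
    rw [Finset.card_image_of_injective _ ?_, card_range]
    intro i j hij
    have : (2*(i:ℤ) - (h:ℤ)*((h:ℤ)+2)) = (2*(j:ℤ) - (h:ℤ)*((h:ℤ)+2)) :=
      mul_left_cancel₀ (ne_of_gt ha) hij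
    have : (i:ℤ) = (j:ℤ) := by linarith
    exact_mod_cast this
end
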